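/- arXiv:1310.7089 — 2 statements merged into one kernel-verified Lean document; each statement's English description precedes it below -/
import Mathlib

section
/- The branch Ω₂ = F - √S is nonnegative for all real k_x, k_y; that is, the smaller eigenvalue of the lattice dynamical matrix is ≥ 0. -/
open Real

/-- F(k_x,k_y): mean of the two eigenvalues of the lattice dynamical matrix. -/
noncomputable def Fk (kx ky : ℝ) : ℝ :=
  1 - Real.cos kx + 2 * (1 - Real.cos (kx / 2) * Real.cos (Real.sqrt 3 * ky / 2))

/-- S(k_x,k_y): discriminant-type quantity in the dispersion relation. -/
noncomputable def Sk (kx ky : ℝ) : ℝ :=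
  (Real.cos kx - Real.cos (kx / 2) * Real.cos (Real.sqrt 3 * ky / 2)) ^ 2
    + 3 * (Real.sin (kx / 2)) ^ 2 * (Real.sin (Real.sqrt 3 * ky / 2)) ^ 2

/-- Upper dispersion branch Ω₁ = F + √S. -/
noncomputable def Om1 (kx ky : ℝ) : ℝ := Fk kx ky + Real.sqrt (Sk kx ky)

/-- Lower dispersion branch Ω₂ = F - √S. -/
noncomputable def Om2 (kx ky : ℝ) : ℝ := Fk kx ky - Real.sqrt (Sk kx ky)

/-- B_xx entry of the Fourier symbol. -/
noncomputable def Bxx (Ω kx ky : ℝ) : ℝ :=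
  -Ω + 3 * (1 - Real.cos (kx / 2) * Real.cos (Real.sqrt 3 * ky / 2))

/-- B_yy entry of the Fourier symbol. -/
noncomputable def Byy (Ω kx ky : ℝ) : ℝ :=
  -Ω + 2 * (1 - Real.cos kx) + 1 - Real.cos (kx / 2) * Real.cos (Real.sqrt 3 * ky / 2)

/-- B_xy = B_yx entry of the Fourier symbol. -/
noncomputable def Bxy (kx ky : ℝ) : ℝ :=
  -Real.sqrt 3 * Real.sin (kx / 2) * Real.sin (Real.sqrt 3 * ky / 2)

/-- the lower branch Ω₂ = F - √S is nonnegative everywhere. -/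
theorem Om2_nonneg (kx ky : ℝ) : 0 ≤ Om2 kx ky := by
  unfold Om2 Fk Sk
  set c := Real.cos (kx / 2) with hc
  set s := Real.sin (kx / 2) with hs
  set d := Real.cos (Real.sqrt 3 * ky / 2) with hd
  set t := Real.sin (Real.sqrt 3 * ky / 2) with ht
  have ha : Real.cos kx = 2 * c ^ 2 - 1 := by
    rw [show kx = 2 * (kx / 2) by ring, Real.cos_two_mul]
  have h1 := Real.sin_sq_add_cos_sq (kx / 2)
  have h2 := Real.sin_sq_add_cos_sq (Real.sqrt 3 * ky / 2)
  rw [← hc, ← hs] at h1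
  rw [← hd, ← ht] at h2
  have hc2 : c ^ 2 ≤ 1 := by nlinarith [sq_nonneg s]
  have hd2 : d ^ 2 ≤ 1 := by nlinarith [sq_nonneg t]
  have hcd : c * d ≤ 1 := by nlinarith [sq_nonneg (c - d)]
  have hF : 0 ≤ 1 - Real.cos kx + 2 * (1 - c * d) := by rw [ha]; nlinarith
  have hS : (Real.cos kx - c * d) ^ 2 + 3 * s ^ 2 * t ^ 2
      ≤ (1 - Real.cos kx + 2 * (1 - c * d)) ^ 2 := by
    rw [ha]
    nlinarith [sq_nonneg (c - d), mul_nonneg (by nlinarith : (0:ℝ) ≤ 1 - c ^ 2) (by linarith : (0:ℝ) ≤ 1 - c * d)]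
  have := Real.sqrt_le_sqrt hS
  rw [Real.sqrt_sq hF] at this
  linarith
end

section
/- The point (0, 2π/√3) is a critical point of Ω₁: the gradient of Ω₁(k_x, k_y) = F + √S vanishes there, and the second-order Taylor expansion is Ω₁ - 6 ∼ -0.375 q_x² - 1.125 q_y² + O(|q|³), where (q_x, q_y) = (k_x, k_y) - (0, 2π/√3). In particular this critical point is a local maximum of Ω₁. -/
open Real

open Asymptotics Filter

open Topology

/-!
Put `k = (x, 2π/√3 + y)`. The shift by `2π/√3` turns `√3 k_y / 2` into `√3 y / 2 + π`, so with
`c = cos (x/2)`, `C = cos (√3 y/2)`, `s = sin (x/2)`, `σ = sin (√3 y/2)` one gets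
`F = 2 + 2 c C + 2 s²` and `S = (2 + B)² + 3 s² σ²`, where `B = c C - 1 - 2 s² = O(|q|²)`.
Writing `S = 4 + p` with `p = 4 B + B² + 3 s² σ² = O(|q|²)` and `√(4 + p) = 2 + p/4 + O(p²)`,
`Ω₁ - 6 = 3 (c C - 1) + (B² + 3 s² σ²)/4 + O(p²)`, and the product-to-sum formula gives
`c C - 1 = -x²/8 - 3y²/8 + O(|q|⁴)`. So the remainder is even `O(|q|⁴)`; the gradient vanishes
because `Ω₁ - 6 = O(|q|²)`, and the point is a local maximum because the quadratic part is
negative definite.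
-/

section ProdNorm

variable {E F : Type*} [SeminormedAddCommGroup E] [SeminormedAddCommGroup F] {l : Filter (E × F)}

theorem isBigO_fst_norm : (fun q : E × F => q.1) =O[l] fun q => ‖q‖ :=
  (isBigO_fst_prod' (f' := id)).norm_right

theorem isBigO_snd_norm : (fun q : E × F => q.2) =O[l] fun q => ‖q‖ :=
  (isBigO_snd_prod' (f' := id)).norm_right

end ProdNorm

theorem Prod.norm_sq_le_fst_sq_add_snd_sq (q : ℝ × ℝ) : ‖q‖ ^ 2 ≤ q.1 ^ 2 + q.2 ^ 2 := by
  rw [Prod.norm_def, Real.norm_eq_abs, Real.norm_eq_abs]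
  rcases le_total |q.1| |q.2| with h | h
  · rw [max_eq_right h, sq_abs]; nlinarith
  · rw [max_eq_left h, sq_abs]; nlinarith

theorem hasFDerivAt_zero_of_isBigO_norm_sq {𝕜 E F : Type*} [NontriviallyNormedField 𝕜]
    [NormedAddCommGroup E] [NormedSpace 𝕜 E] [NormedAddCommGroup F] [NormedSpace 𝕜 F]
    {f : E → F} {a : E} (h : (fun q => f (a + q) - f a) =O[𝓝 0] fun q => ‖q‖ ^ 2) :
    HasFDerivAt f (0 : E →L[𝕜] F) a := by
  rw [hasFDerivAt_iff_isLittleO_nhds_zero]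
  simpa using h.trans_isLittleO (isLittleO_norm_pow_id one_lt_two)

theorem isLocalMax_of_isLittleO_of_le_neg_sq {E : Type*} [SeminormedAddCommGroup E]
    {f Q : E → ℝ} {a : E} {c : ℝ} (hc : 0 < c) (hQ : ∀ q, Q q ≤ -(c * ‖q‖ ^ 2))
    (h : (fun q => f (a + q) - f a - Q q) =o[𝓝 0] fun q => ‖q‖ ^ 2) : IsLocalMax f a := by
  rw [IsLocalMax, IsMaxFilter, ← map_add_left_nhds_zero, eventually_map]
  filter_upwards [h.bound hc] with q hq
  rw [Real.norm_eq_abs, norm_pow, norm_norm] at hq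
  linarith [hQ q, (abs_le.mp hq).2]

theorem abs_sqrt_sq_add_sub_le {a p : ℝ} (ha : 0 < a) (hp : 0 ≤ a ^ 2 + p) :
    |√(a ^ 2 + p) - a - p / (2 * a)| ≤ p ^ 2 / (2 * a ^ 3) := by
  set t := √(a ^ 2 + p)
  have ht : t ^ 2 = a ^ 2 + p := sq_sqrt hp
  have herr : t - a - p / (2 * a) = -((t - a) ^ 2 / (2 * a)) := by
    field_simp
    linear_combination ht
  have hsq : (t - a) ^ 2 * a ^ 2 ≤ p ^ 2 := calc
    (t - a) ^ 2 * a ^ 2 ≤ (t - a) ^ 2 * (t + a) ^ 2 := by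
      gcongr
      linarith [sqrt_nonneg (a ^ 2 + p)]
    _ = p ^ 2 := by linear_combination (t ^ 2 - a ^ 2 + p) * ht
  rw [herr, abs_neg, abs_of_nonneg (by positivity), div_le_div_iff₀ (by positivity) (by positivity)]
  nlinarith [mul_le_mul_of_nonneg_right hsq ha.le]

theorem sqrt_sq_add_sub_isBigO {a : ℝ} (ha : 0 < a) :
    (fun p : ℝ => √(a ^ 2 + p) - a - p / (2 * a)) =O[𝓝 0] fun p => p ^ 2 := by
  refine IsBigO.of_bound (1 / (2 * a ^ 3)) ?_
  filter_upwards [Ioi_mem_nhds (neg_lt_zero.mpr (pow_pos ha 2))] with p hp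
  rw [Real.norm_eq_abs, Real.norm_eq_abs, abs_of_nonneg (sq_nonneg p), one_div_mul_eq_div]
  exact abs_sqrt_sq_add_sub_le ha (by linarith [Set.mem_Ioi.mp hp])

theorem cos_sub_one_add_sq_div_two_isBigO :
    (fun t : ℝ => cos t - 1 + t ^ 2 / 2) =O[𝓝 0] fun t => t ^ 4 := by
  refine IsBigO.of_bound (5 / 96) ?_
  filter_upwards [Metric.closedBall_mem_nhds (0 : ℝ) one_pos] with t ht
  rw [Metric.mem_closedBall, dist_zero_right, Real.norm_eq_abs] at ht
  rw [Real.norm_eq_abs, Real.norm_eq_abs, abs_pow, mul_comm]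
  convert cos_bound ht using 2
  ring

section Composition

variable {α : Type*} {l : Filter α} {g L L₁ L₂ : α → ℝ}

theorem Asymptotics.IsBigO.sin_comp (hL : L =O[l] g) : (fun x => sin (L x)) =O[l] g :=
  (IsBigO.of_bound' (Eventually.of_forall fun _ => abs_sin_le_abs)).trans hL

theorem Asymptotics.IsBigO.cos_comp_sub_one_add (hL : L =O[l] g) (hg : Tendsto g l (𝓝 0)) :
    (fun x => cos (L x) - 1 + L x ^ 2 / 2) =O[l] fun x => g x ^ 4 :=
  (cos_sub_one_add_sq_div_two_isBigO.comp_tendsto (hL.trans_tendsto hg)).trans (hL.pow 4)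

theorem Asymptotics.IsBigO.cos_mul_cos_sub_one_add (h₁ : L₁ =O[l] g) (h₂ : L₂ =O[l] g)
    (hg : Tendsto g l (𝓝 0)) :
    (fun x => cos (L₁ x) * cos (L₂ x) - 1 + (L₁ x ^ 2 + L₂ x ^ 2) / 2) =O[l]
      fun x => g x ^ 4 := by
  have hprod (a b : ℝ) : cos a * cos b - 1 + (a ^ 2 + b ^ 2) / 2
      = ((cos (a + b) - 1 + (a + b) ^ 2 / 2) + (cos (a - b) - 1 + (a - b) ^ 2 / 2)) / 2 := by
    rw [cos_add, cos_sub]; ring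
  simp_rw [hprod]
  exact (((h₁.add h₂).cos_comp_sub_one_add hg).add
    ((h₁.sub h₂).cos_comp_sub_one_add hg)).const_mul_left (1 / 2) |>.congr_left fun x => by ring

end Composition

theorem sqrt_three_mul_shift_div_two (y : ℝ) :
    √3 * (2 * π / √3 + y) / 2 = √3 * y / 2 + π := by
  field_simp
  ring

theorem cos_eq_one_sub_two_mul_sin_half_sq (x : ℝ) : cos x = 1 - 2 * sin (x / 2) ^ 2 := by
  rw [← cos_two_mul_eq_one_sub, mul_div_cancel₀ x two_ne_zero]

theorem Fk_shift (x y : ℝ) :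
    Fk x (2 * π / √3 + y) = 2 * sin (x / 2) ^ 2 + 2 * (1 + cos (x / 2) * cos (√3 * y / 2)) := by
  rw [Fk, sqrt_three_mul_shift_div_two, cos_add_pi, cos_eq_one_sub_two_mul_sin_half_sq x]
  ring

theorem Sk_shift (x y : ℝ) :
    Sk x (2 * π / √3 + y) = (1 - 2 * sin (x / 2) ^ 2 + cos (x / 2) * cos (√3 * y / 2)) ^ 2
      + 3 * sin (x / 2) ^ 2 * sin (√3 * y / 2) ^ 2 := by
  rw [Sk, sqrt_three_mul_shift_div_two, cos_add_pi, sin_add_pi,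
    cos_eq_one_sub_two_mul_sin_half_sq x]
  ring

theorem Om1_at_critical_point : Om1 0 (2 * π / √3) = 6 := by
  rw [Om1, ← add_zero (2 * π / √3), Fk_shift, Sk_shift]
  norm_num

theorem Om1_shift_sub_quadratic_eq (x y : ℝ) :
    let u := cos (x / 2) * cos (√3 * y / 2) - 1
    let B := u - 2 * sin (x / 2) ^ 2
    let w := 3 * sin (x / 2) ^ 2 * sin (√3 * y / 2) ^ 2
    let p := 4 * B + B ^ 2 + w
    Om1 x (2 * π / √3 + y) - 6 - (-(0.375 : ℝ) * x ^ 2 - 1.125 * y ^ 2)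
      = 3 * (u + ((x / 2) ^ 2 + (√3 * y / 2) ^ 2) / 2) + (B ^ 2 + w) / 4
        + (√(2 ^ 2 + p) - 2 - p / (2 * 2)) := by
  intro u B w p
  have hS : Sk x (2 * π / √3 + y) = 2 ^ 2 + p := by rw [Sk_shift]; ring
  rw [Om1, Fk_shift, hS]
  linear_combination (-3 / 8 * y ^ 2) * sq_sqrt (show (0 : ℝ) ≤ 3 by norm_num)

theorem Om1_expansion :
    (fun q : ℝ × ℝ => Om1 q.1 (2 * π / √3 + q.2) - 6 - (-(0.375 : ℝ) * q.1 ^ 2 - 1.125 * q.2 ^ 2))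
      =O[𝓝 0] fun q => ‖q‖ ^ 4 := by
  have hg : Tendsto (fun q : ℝ × ℝ => ‖q‖) (𝓝 0) (𝓝 0) := tendsto_norm_zero
  have hg2 : Tendsto (fun q : ℝ × ℝ => ‖q‖ ^ 2) (𝓝 0) (𝓝 0) := by simpa using hg.pow 2
  have h42 : (fun q : ℝ × ℝ => ‖q‖ ^ 4) =O[𝓝 0] fun q => ‖q‖ ^ 2 :=
    (isLittleO_norm_pow_norm_pow (by norm_num)).isBigO
  have hX : (fun q : ℝ × ℝ => q.1 / 2) =O[𝓝 0] fun q => ‖q‖ :=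
    (isBigO_fst_norm.const_mul_left (1 / 2)).congr_left fun q => by ring
  have hY : (fun q : ℝ × ℝ => √3 * q.2 / 2) =O[𝓝 0] fun q => ‖q‖ :=
    (isBigO_snd_norm.const_mul_left (√3 / 2)).congr_left fun q => by ring
  have hu4 := hX.cos_mul_cos_sub_one_add hY hg
  have hu : (fun q : ℝ × ℝ => cos (q.1 / 2) * cos (√3 * q.2 / 2) - 1) =O[𝓝 0] fun q => ‖q‖ ^ 2 :=
    (hu4.trans h42).sub (((hX.pow 2).add (hY.pow 2)).const_mul_left (1 / 2))
      |>.congr_left fun q => by ring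
  have hs := hX.sin_comp.pow 2
  have hS := hY.sin_comp.pow 2
  have hB := hu.sub (hs.const_mul_left 2)
  have hB2 : _ =O[𝓝 0] fun q : ℝ × ℝ => ‖q‖ ^ 4 := (hB.pow 2).congr_right fun q => by ring
  have hw : _ =O[𝓝 0] fun q : ℝ × ℝ => ‖q‖ ^ 4 :=
    ((hs.const_mul_left 3).mul hS).congr_right fun q => by ring
  have hp := ((hB.const_mul_left 4).add ((hB2.add hw).trans h42)).congr_left
    fun q => (add_assoc _ _ _).symm
  have hE : _ =O[𝓝 0] fun q : ℝ × ℝ => ‖q‖ ^ 4 :=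
    ((sqrt_sq_add_sub_isBigO two_pos).comp_tendsto (hp.trans_tendsto hg2)).trans
      ((hp.pow 2).congr_right fun q => by ring)
  exact (((hu4.const_mul_left 3).add ((hB2.add hw).const_mul_left (1 / 4))).add hE).congr_left
    fun q => by rw [Om1_shift_sub_quadratic_eq, Function.comp_apply]; ring

/-- (0, 2π/√3) is a critical point of Ω₁ (vanishing gradient),
with Taylor expansion Ω₁ - 6 = -0.375 q_x² - 1.125 q_y² + O(|q|³); it is a
local maximum of Ω₁. -/
theorem Om1_critical_point_expansion :
    fderiv ℝ (fun p : ℝ × ℝ => Om1 p.1 p.2) (0, 2 * Real.pi / Real.sqrt 3) = 0 ∧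
    ((fun q : ℝ × ℝ =>
        Om1 q.1 (2 * Real.pi / Real.sqrt 3 + q.2) - 6
          - (-(0.375 : ℝ) * q.1 ^ 2 - 1.125 * q.2 ^ 2))
      =O[nhds (0 : ℝ × ℝ)] fun q => ‖q‖ ^ 3) ∧
    IsLocalMax (fun p : ℝ × ℝ => Om1 p.1 p.2) (0, 2 * Real.pi / Real.sqrt 3) := by
  have hQ : (fun q : ℝ × ℝ => -(0.375 : ℝ) * q.1 ^ 2 - 1.125 * q.2 ^ 2) =O[𝓝 0]
      fun q => ‖q‖ ^ 2 :=
    ((isBigO_fst_norm.pow 2).const_mul_left (-0.375)).sub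
      ((isBigO_snd_norm.pow 2).const_mul_left 1.125) |>.congr_left fun q => by ring
  have hQ_le (q : ℝ × ℝ) : -(0.375 : ℝ) * q.1 ^ 2 - 1.125 * q.2 ^ 2 ≤ -(3 / 8 * ‖q‖ ^ 2) := by
    nlinarith [q.norm_sq_le_fst_sq_add_snd_sq]
  have hshift (q : ℝ × ℝ) : Om1 ((0, 2 * π / √3) + q).1 ((0, 2 * π / √3) + q).2
      - Om1 (0, 2 * π / √3).1 (0, 2 * π / √3).2 = Om1 q.1 (2 * π / √3 + q.2) - 6 := by
    simp [Om1_at_critical_point]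
  refine ⟨(hasFDerivAt_zero_of_isBigO_norm_sq ?_).fderiv,
    Om1_expansion.trans (isLittleO_norm_pow_norm_pow (by norm_num)).isBigO,
    isLocalMax_of_isLittleO_of_le_neg_sq (by norm_num : (0 : ℝ) < 3 / 8) hQ_le ?_⟩ <;>
    simp_rw [hshift]
  · exact ((Om1_expansion.trans (isLittleO_norm_pow_norm_pow (by norm_num)).isBigO).add hQ)
      |>.congr_left fun q => by ring
  · exact Om1_expansion.trans_isLittleO (isLittleO_norm_pow_norm_pow (by norm_num))
end
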